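/- Every real polynomial P on ℝ³×ℝ³ that is invariant under the simultaneous action of SO(3) (P(kx,ky)=P(x,y) for all k∈SO(3)) is invariant under the simultaneous action of O(3) (P(kx,ky)=P(x,y) for all k∈O(3)). -/

import Mathlib

/-!
For odd `n ≥ 3`, `-1 ∉ SO(n)` but `O(n) = SO(n) ∪ -SO(n)`, so it suffices that an `SO(n)`-invariant
function of a pair `(x, y)` is invariant under `(x, y) ↦ (-x, -y)`. Since `n ≥ 3`, some `u ≠ 0` is
orthogonal to both `x` and `y`, and the half-turn about `ℝ u` lies in `SO(n)` and negates `x` and `y`.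
-/

open MeasureTheory Complex Matrix

noncomputable section

abbrev V3 := Fin 3 → ℝ
abbrev Mat3 := Matrix (Fin 3) (Fin 3) ℝ

instance : MeasurableSpace Mat3 := (inferInstance : MeasurableSpace (Fin 3 → Fin 3 → ℝ))

def SO3 : Set Mat3 := {A | A * A.transpose = 1 ∧ A.det = 1}

def Inv3 (F : V3 × V3 → ℂ) : Prop :=
  ∀ k ∈ SO3, ∀ x y : V3, F (k.mulVec x, k.mulVec y) = F (x, y)

def IsPolyFun6 (P : V3 × V3 → ℝ) : Prop :=
  ∃ Q : MvPolynomial (Fin 6) ℝ, ∀ p : V3 × V3,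
    P p = MvPolynomial.eval ![p.1 0, p.1 1, p.1 2, p.2 0, p.2 1, p.2 2] Q

section HalfTurn

variable {n : ℕ}

lemma exists_ne_zero_orthogonal_pair (hn : 2 < n) (x y : Fin n → ℝ) :
    ∃ u ≠ 0, x ⬝ᵥ u = 0 ∧ y ⬝ᵥ u = 0 := by
  have hker : LinearMap.ker (Matrix.of ![x, y]).mulVecLin ≠ ⊥ :=
    LinearMap.ker_ne_bot_of_finrank_lt (by simpa using hn)
  obtain ⟨u, hu, hu0⟩ := Submodule.exists_mem_ne_zero_of_ne_bot hker
  have hxy := LinearMap.mem_ker.mp hu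
  exact ⟨u, hu0, congrFun hxy 0, congrFun hxy 1⟩

/-- The rotation by `π` about the line `ℝ u`: it fixes `u` and is `-1` on `u^⊥`. -/
def halfTurn (u : Fin n → ℝ) : Matrix (Fin n) (Fin n) ℝ :=
  (2 / (u ⬝ᵥ u)) • vecMulVec u u - 1

variable {u : Fin n → ℝ}

lemma halfTurn_mulVec_of_dotProduct_eq_zero {x : Fin n → ℝ} (h : u ⬝ᵥ x = 0) :
    halfTurn u *ᵥ x = -x := by
  simp [halfTurn, sub_mulVec, smul_mulVec, vecMulVec_mulVec, h]

lemma halfTurn_mul_transpose (hu : u ≠ 0) : halfTurn u * (halfTurn u)ᵀ = 1 := by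
  have huu : u ⬝ᵥ u ≠ 0 := by simpa using hu
  have hsq : vecMulVec u u * vecMulVec u u = (u ⬝ᵥ u) • vecMulVec u u := by
    rw [vecMulVec_mul_vecMulVec, vecMulVec_smul]
  have hc : 2 / (u ⬝ᵥ u) * (2 / (u ⬝ᵥ u)) * (u ⬝ᵥ u) = 2 * (2 / (u ⬝ᵥ u)) := by
    field_simp
  simp only [halfTurn, transpose_sub, transpose_smul, transpose_vecMulVec, transpose_one,
    sub_mul, mul_sub, smul_mul_smul_comm, hsq, smul_smul, hc, Matrix.mul_one, Matrix.one_mul]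
  module

lemma det_halfTurn (hu : u ≠ 0) : (halfTurn u).det = (-1) ^ (n + 1) := by
  have huu : u ⬝ᵥ u ≠ 0 := by simpa using hu
  have hrank_one : halfTurn u =
      -(1 + replicateCol Unit (-(2 / (u ⬝ᵥ u)) • u) * replicateRow Unit u) := by
    rw [halfTurn, ← vecMulVec_eq, smul_vecMulVec, neg_smul]
    abel
  rw [hrank_one, det_neg, det_one_add_replicateCol_mul_replicateRow, dotProduct_smul,
    smul_eq_mul, Fintype.card_fin]
  field_simp
  ring

end HalfTurn

section OddDimension

variable {n : ℕ} {α : Type*} {F : (Fin n → ℝ) × (Fin n → ℝ) → α}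

theorem apply_neg_neg_of_special_orthogonal_invariant (hn : Odd n) (h2 : 2 < n)
    (hF : ∀ k : Matrix (Fin n) (Fin n) ℝ, k * kᵀ = 1 → k.det = 1 →
      ∀ x y, F (k *ᵥ x, k *ᵥ y) = F (x, y))
    (x y : Fin n → ℝ) : F (-x, -y) = F (x, y) := by
  obtain ⟨u, hu, hxu, hyu⟩ := exists_ne_zero_orthogonal_pair h2 x y
  have hdet : (halfTurn u).det = 1 := by rw [det_halfTurn hu, hn.add_one.neg_one_pow]
  rw [← halfTurn_mulVec_of_dotProduct_eq_zero (x := x) (by rwa [dotProduct_comm]),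
    ← halfTurn_mulVec_of_dotProduct_eq_zero (x := y) (by rwa [dotProduct_comm])]
  exact hF _ (halfTurn_mul_transpose hu) hdet x y

theorem apply_mulVec_of_special_orthogonal_invariant (hn : Odd n) (h2 : 2 < n)
    (hF : ∀ k : Matrix (Fin n) (Fin n) ℝ, k * kᵀ = 1 → k.det = 1 →
      ∀ x y, F (k *ᵥ x, k *ᵥ y) = F (x, y))
    (k : Matrix (Fin n) (Fin n) ℝ) (hk : k * kᵀ = 1) (x y : Fin n → ℝ) :
    F (k *ᵥ x, k *ᵥ y) = F (x, y) := by
  have hdet : k.det * k.det = 1 := by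
    simpa only [det_mul, det_transpose, det_one] using congrArg det hk
  rcases mul_self_eq_one_iff.mp hdet with hdet | hdet
  · exact hF k hk hdet x y
  · have hneg_det : (-k).det = 1 := by
      rw [det_neg, hdet, Fintype.card_fin, hn.neg_one_pow]
      norm_num
    have hneg_orth : (-k) * (-k)ᵀ = 1 := by rw [transpose_neg, neg_mul_neg, hk]
    calc F (k *ᵥ x, k *ᵥ y) = F (-((-k) *ᵥ x), -((-k) *ᵥ y)) := by simp only [neg_mulVec, neg_neg]
      _ = F ((-k) *ᵥ x, (-k) *ᵥ y) := apply_neg_neg_of_special_orthogonal_invariant hn h2 hF _ _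
      _ = F (x, y) := hF (-k) hneg_orth hneg_det x y

end OddDimension

theorem statement12_general (P : V3 × V3 → ℝ)
    (hinv : ∀ k ∈ SO3, ∀ x y : V3, P (k.mulVec x, k.mulVec y) = P (x, y)) :
    ∀ k : Mat3, k * k.transpose = 1 → ∀ x y : V3, P (k.mulVec x, k.mulVec y) = P (x, y) :=
  apply_mulVec_of_special_orthogonal_invariant (by decide) (by norm_num)
    fun k hk hdet => hinv k ⟨hk, hdet⟩

/-- Every `SO(3)`-invariant polynomial on `ℝ³ × ℝ³` is `O(3)`-invariant. -/
theorem statement12 (P : V3 × V3 → ℝ) (hP : IsPolyFun6 P)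
    (hinv : ∀ k ∈ SO3, ∀ x y : V3, P (k.mulVec x, k.mulVec y) = P (x, y)) :
    ∀ k : Mat3, k * k.transpose = 1 → ∀ x y : V3, P (k.mulVec x, k.mulVec y) = P (x, y) :=
  statement12_general P hinv
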